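/- arXiv:1511.07263 — 5 statements merged into one kernel-verified Lean document; each statement's English description precedes it below -/
import Mathlib

section
/- Let A be an n×d real matrix with singular values σ₁ ≥ σ₂ ≥ ... ≥ 0, and let k ≥ 1 with ‖A - A_k‖_F² > 0 (where A_k is the best rank-k approximation). Define the i-th ridge leverage score as τ̄_i(A) = aᵢᵀ (A Aᵀ + (‖A - A_k‖_F²/k)·I)⁺ aᵢ, where aᵢ is the i-th column of A. Then the sum of all ridge leverage scores satisfies ∑_{i=1}^d τ̄_i(A) ≤ 2k. -/
open Matrix BigOperators

noncomputable section

/-- Squared Frobenius norm. -/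
def frob2 {m n : ℕ} (A : Matrix (Fin m) (Fin n) ℝ) : ℝ := ∑ i, ∑ j, (A i j) ^ 2

/-- `X` is an orthogonal projection of rank at most `k`. -/
def IsOrthProj {n : ℕ} (k : ℕ) (X : Matrix (Fin n) (Fin n) ℝ) : Prop :=
  Xᵀ = X ∧ X * X = X ∧ X.rank ≤ k

/-- `‖A - A_k‖_F²`, the squared Frobenius error of the best rank-`k` approximation,
characterized as the infimum over rank-`≤k` orthogonal projections. -/
def tailNorm2 {n d : ℕ} (k : ℕ) (A : Matrix (Fin n) (Fin d) ℝ) : ℝ :=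
  sInf { e | ∃ X : Matrix (Fin n) (Fin n) ℝ, IsOrthProj k X ∧ e = frob2 (A - X * A) }

/-- Moore–Penrose conditions. -/
def IsMoorePenrose {n : ℕ} (A P : Matrix (Fin n) (Fin n) ℝ) : Prop :=
  A * P * A = A ∧ P * A * P = P ∧ (A * P)ᵀ = A * P ∧ (P * A)ᵀ = P * A

/-- Moore–Penrose pseudoinverse. -/
def pinv {n : ℕ} (A : Matrix (Fin n) (Fin n) ℝ) : Matrix (Fin n) (Fin n) ℝ :=
  letI := Classical.propDecidable
  if h : ∃ P, IsMoorePenrose A P then h.choose else 0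

/-- Loewner (PSD) order. -/
def lle {n : ℕ} (M N : Matrix (Fin n) (Fin n) ℝ) : Prop := (N - M).PosSemidef

/-- `i`-th column of a matrix. -/
def col {n d : ℕ} (A : Matrix (Fin n) (Fin d) ℝ) (i : Fin d) : Fin n → ℝ := fun r => A r i

/-- Ridge leverage score `τ̄_i(A) = aᵢᵀ (A Aᵀ + (‖A-A_k‖_F²/k)·I)⁺ aᵢ`. -/
def ridgeScore {n d : ℕ} (k : ℕ) (A : Matrix (Fin n) (Fin d) ℝ) (i : Fin d) : ℝ :=
  _root_.col A i ⬝ᵥ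
    (pinv (A * Aᵀ + (tailNorm2 k A / (k : ℝ)) • (1 : Matrix (Fin n) (Fin n) ℝ)) *ᵥ _root_.col A i)

namespace RidgeAux

variable {n d : ℕ}

lemma conjT_eq_transpose {m p : ℕ} (P : Matrix (Fin m) (Fin p) ℝ) : Pᴴ = Pᵀ := by
  ext i j; simp [conjTranspose_apply]

lemma psd_trace_nonneg {P : Matrix (Fin n) (Fin n) ℝ} (h : P.PosSemidef) :
    0 ≤ P.trace := by
  rw [Matrix.trace]
  refine Finset.sum_nonneg fun i _ => ?_
  have := h.dotProduct_mulVec_nonneg (Pi.single i 1)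
  simpa [dotProduct, Matrix.mulVec, Pi.single_apply, Matrix.diag] using this

lemma psd_smul {P : Matrix (Fin n) (Fin n) ℝ} (h : P.PosSemidef) {c : ℝ} (hc : 0 ≤ c) :
    (c • P).PosSemidef := by
  refine posSemidef_iff_dotProduct_mulVec.mpr ⟨?_, fun x => ?_⟩
  · show (c • P)ᴴ = c • P
    rw [conjTranspose_smul, h.1]
    simp
  · rw [smul_mulVec, dotProduct_smul]
    exact mul_nonneg hc (h.dotProduct_mulVec_nonneg x)

lemma trace_idem {X : Matrix (Fin n) (Fin n) ℝ} (h : X * X = X) :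
    X.trace = (X.rank : ℝ) := by
  have hf : X.mulVecLin ∘ₗ X.mulVecLin = X.mulVecLin := by
    rw [← Matrix.mulVecLin_mul, h]
  obtain ⟨p, hp⟩ := (LinearMap.isProj_iff_isIdempotentElem X.mulVecLin).mpr hf
  have hrange : LinearMap.range X.mulVecLin = p := by
    apply le_antisymm
    · rintro _ ⟨x, rfl⟩; exact hp.map_mem x
    · intro x hx; exact ⟨x, hp.map_id x hx⟩
  have ht := hp.trace
  rw [LinearMap.trace_eq_matrix_trace ℝ (Pi.basisFun ℝ (Fin n)),
    LinearMap.toMatrix_eq_toMatrix'] at ht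
  rw [show LinearMap.toMatrix' X.mulVecLin = X from by
    rw [← Matrix.toLin'_apply' X]; exact LinearMap.toMatrix'_toLin' X] at ht
  rw [ht, Matrix.rank, hrange]

lemma pinv_of_isUnit {M : Matrix (Fin n) (Fin n) ℝ} (hM : IsUnit M) : pinv M = M⁻¹ := by
  have h1 : M⁻¹ * M = 1 := nonsing_inv_mul M ((isUnit_iff_isUnit_det M).mp hM)
  have h2 : M * M⁻¹ = 1 := mul_nonsing_inv M ((isUnit_iff_isUnit_det M).mp hM)
  have hmp : IsMoorePenrose M M⁻¹ := by
    refine ⟨?_, ?_, ?_, ?_⟩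
    · rw [h2, one_mul]
    · rw [h1, one_mul]
    · rw [h2, transpose_one]
    · rw [h1, transpose_one]
  have hex : ∃ P, IsMoorePenrose M P := ⟨M⁻¹, hmp⟩
  have hspec : IsMoorePenrose M hex.choose := hex.choose_spec
  have huniq : hex.choose = M⁻¹ := by
    have h3 := hspec.1
    calc hex.choose = (M⁻¹ * M) * hex.choose * (M * M⁻¹) := by rw [h1, h2, one_mul, mul_one]
      _ = M⁻¹ * (M * hex.choose * M) * M⁻¹ := by noncomm_ring
      _ = M⁻¹ * M * M⁻¹ := by rw [h3, mul_assoc]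
      _ = M⁻¹ := by rw [h1, one_mul]
  unfold pinv
  rw [dif_pos hex, huniq]

lemma sum_dot_eq_trace {n d : ℕ} (A : Matrix (Fin n) (Fin d) ℝ) (P : Matrix (Fin n) (Fin n) ℝ) :
    ∑ i : Fin d, _root_.col A i ⬝ᵥ (P *ᵥ _root_.col A i) = Matrix.trace (Aᵀ * (P * A)) := by
  simp only [Matrix.trace, Matrix.diag, Matrix.mul_apply, Matrix.mulVec, dotProduct,
    _root_.col, Matrix.transpose_apply, Finset.mul_sum, Finset.sum_mul]

lemma frob2_eq_trace {m p : ℕ} (D : Matrix (Fin m) (Fin p) ℝ) :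
    frob2 D = Matrix.trace (D * Dᵀ) := by
  simp [frob2, Matrix.trace, Matrix.mul_apply, Matrix.diag, sq]

end RidgeAux

open RidgeAux
theorem sum_ridgeScores_le {n d k : ℕ} (hk : 1 ≤ k) (A : Matrix (Fin n) (Fin d) ℝ)
    (htail : 0 < tailNorm2 k A) :
    ∑ i : Fin d, ridgeScore k A i ≤ 2 * (k : ℝ) := by
  have hk0 : (0:ℝ) < k := by exact_mod_cast hk
  set T : ℝ := tailNorm2 k A with hT
  set lam : ℝ := T / k with hlamdef
  have hlam : 0 < lam := div_pos htail hk0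
  set B : Matrix (Fin n) (Fin n) ℝ := A * Aᵀ with hBdef
  set M : Matrix (Fin n) (Fin n) ℝ := B + lam • (1 : Matrix (Fin n) (Fin n) ℝ) with hMdef
  -- basic facts
  have hBpsd : B.PosSemidef := by
    have := posSemidef_self_mul_conjTranspose A
    rwa [conjT_eq_transpose] at this
  have hIpd : (lam • (1 : Matrix (Fin n) (Fin n) ℝ)).PosDef := by
    refine posDef_iff_dotProduct_mulVec.mpr ⟨?_, fun x hx => ?_⟩
    · show (lam • (1 : Matrix (Fin n) (Fin n) ℝ))ᴴ = _
      rw [conjTranspose_smul, conjTranspose_one]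
      simp
    · rw [smul_mulVec, one_mulVec, dotProduct_smul]
      have hxx : 0 < dotProduct (star x) x := by
        have : 0 < dotProduct (star x) x ↔ x ≠ 0 := dotProduct_star_self_pos_iff
        exact this.mpr hx
      exact mul_pos hlam hxx
  have hMpd : M.PosDef := Matrix.PosDef.posSemidef_add hBpsd hIpd
  have hMunit : IsUnit M := hMpd.isUnit
  have hdet : IsUnit M.det := (isUnit_iff_isUnit_det M).mp hMunit
  have h1 : M⁻¹ * M = 1 := nonsing_inv_mul M hdet
  have h2 : M * M⁻¹ = 1 := mul_nonsing_inv M hdet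
  set C : Matrix (Fin n) (Fin n) ℝ := M⁻¹ * B with hCdef
  -- 1 - C = lam • M⁻¹
  have hCsplit : (1 : Matrix (Fin n) (Fin n) ℝ) - C = lam • M⁻¹ := by
    have e1 : C + lam • M⁻¹ = 1 := by
      have t0 : M⁻¹ * (lam • (1 : Matrix (Fin n) (Fin n) ℝ)) = lam • M⁻¹ := by
        rw [Matrix.mul_smul, mul_one]
      rw [hCdef, ← t0, ← Matrix.mul_add, ← hMdef, h1]
    linear_combination (norm := abel) - e1
  have h1mC : ((1 : Matrix (Fin n) (Fin n) ℝ) - C).PosSemidef := by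
    rw [hCsplit]; exact psd_smul hMpd.inv.posSemidef hlam.le
  -- commutation
  have hMB : M * B = B * M := by
    rw [hMdef]
    simp [Matrix.add_mul, Matrix.mul_add, Matrix.smul_mul, Matrix.mul_smul]
  have hcomm : M⁻¹ * B = B * M⁻¹ := by
    calc M⁻¹ * B = M⁻¹ * B * (M * M⁻¹) := by rw [h2, mul_one]
      _ = M⁻¹ * (B * M) * M⁻¹ := by noncomm_ring
      _ = M⁻¹ * (M * B) * M⁻¹ := by rw [hMB]
      _ = (M⁻¹ * M) * (B * M⁻¹) := by noncomm_ring
      _ = B * M⁻¹ := by rw [h1, one_mul]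
  have hBsym : Bᵀ = B := by rw [hBdef]; simp [Matrix.transpose_mul]
  -- (1/lam) • B - C is PSD
  have hBC : ((1/lam) • B - C).PosSemidef := by
    have key : (1/lam) • B - C = (1/lam) • (Bᵀ * M⁻¹ * B) := by
      have e2 : B - lam • C = B * M⁻¹ * B := by
        have t1 : (1 - lam • M⁻¹) * B = B - lam • (M⁻¹ * B) := by
          rw [Matrix.sub_mul, one_mul, Matrix.smul_mul]
        rw [← hCdef] at t1
        have t2 : (1 : Matrix (Fin n) (Fin n) ℝ) - lam • M⁻¹ = C := by
          rw [← hCsplit]; abel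
        rw [t2] at t1
        rw [← t1, hCdef, hcomm]
      rw [hBsym, ← e2, smul_sub, smul_smul, one_div, inv_mul_cancel₀ hlam.ne', one_smul]
    rw [key]
    refine psd_smul ?_ (by positivity)
    have := hMpd.inv.posSemidef.conjTranspose_mul_mul_same B
    rwa [conjT_eq_transpose] at this
  -- sum of ridge scores equals trace of C
  have hpinv : pinv M = M⁻¹ := pinv_of_isUnit hMunit
  have hsum : ∑ i : Fin d, ridgeScore k A i = Matrix.trace C := by
    have hM' : A * Aᵀ + (tailNorm2 k A / (k : ℝ)) • (1 : Matrix (Fin n) (Fin n) ℝ) = M := by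
      rw [hMdef, hBdef, hlamdef, hT]
    have step1 : ∑ i : Fin d, ridgeScore k A i = Matrix.trace (Aᵀ * (M⁻¹ * A)) := by
      simp only [ridgeScore, hM', hpinv]
      exact sum_dot_eq_trace A M⁻¹
    rw [step1, Matrix.trace_mul_comm, Matrix.mul_assoc, hCdef, hBdef]
  -- key bound for every orthogonal projection
  have hbound : ∀ X : Matrix (Fin n) (Fin n) ℝ, IsOrthProj k X →
      lam * (Matrix.trace C - k) ≤ frob2 (A - X * A) := by
    rintro X ⟨hXsym, hXidem, hXrank⟩
    set Y : Matrix (Fin n) (Fin n) ℝ := 1 - X with hYdef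
    have hYsym : Yᵀ = Y := by rw [hYdef, Matrix.transpose_sub, Matrix.transpose_one, hXsym]
    have hYidem : Y * Y = Y := by
      rw [hYdef]
      rw [Matrix.sub_mul, Matrix.mul_sub, Matrix.mul_sub, hXidem]
      simp
    -- trace (C*X) ≤ k
    have htX : Matrix.trace X ≤ (k : ℝ) := by
      rw [trace_idem hXidem]; exact_mod_cast hXrank
    have hCX : Matrix.trace (C * X) ≤ (k : ℝ) := by
      have hpsd : (Xᵀ * (1 - C) * X).PosSemidef := by
        have := h1mC.conjTranspose_mul_mul_same X
        rwa [conjT_eq_transpose] at this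
      have h0 := psd_trace_nonneg hpsd
      have heq : Matrix.trace (Xᵀ * (1 - C) * X) = Matrix.trace X - Matrix.trace (C * X) := by
        rw [hXsym, Matrix.trace_mul_comm, ← mul_assoc, hXidem, Matrix.mul_sub, mul_one,
          Matrix.trace_sub, Matrix.trace_mul_comm]
      linarith
    -- trace (C*Y) ≤ (1/lam) * trace (B*Y)
    have hCY : Matrix.trace (C * Y) ≤ (1/lam) * Matrix.trace (B * Y) := by
      have hpsd : (Yᵀ * ((1/lam) • B - C) * Y).PosSemidef := by
        have := hBC.conjTranspose_mul_mul_same Y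
        rwa [conjT_eq_transpose] at this
      have h0 := psd_trace_nonneg hpsd
      have heq : Matrix.trace (Yᵀ * ((1/lam) • B - C) * Y)
          = (1/lam) * Matrix.trace (B * Y) - Matrix.trace (C * Y) := by
        rw [hYsym, Matrix.trace_mul_comm, ← mul_assoc, hYidem, Matrix.mul_sub,
          Matrix.trace_sub, Matrix.mul_smul, Matrix.trace_smul, smul_eq_mul,
          Matrix.trace_mul_comm Y B, Matrix.trace_mul_comm Y C]
      linarith
    -- trace (B*Y) = frob2 (A - X*A)
    have hfro : frob2 (A - X * A) = Matrix.trace (B * Y) := by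
      have hYA : A - X * A = Y * A := by rw [hYdef, Matrix.sub_mul, Matrix.one_mul]
      rw [hYA, frob2_eq_trace, Matrix.transpose_mul, hYsym, hBdef]
      calc Matrix.trace (Y * A * (Aᵀ * Y))
          = Matrix.trace (Y * (A * Aᵀ) * Y) := by
            rw [← Matrix.mul_assoc, Matrix.mul_assoc Y A Aᵀ]
        _ = Matrix.trace (Y * (Y * (A * Aᵀ))) := by rw [Matrix.trace_mul_comm]
        _ = Matrix.trace (Y * Y * (A * Aᵀ)) := by rw [Matrix.mul_assoc]
        _ = Matrix.trace (A * Aᵀ * Y) := by rw [hYidem, Matrix.trace_mul_comm]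
    -- combine
    have hsplit : Matrix.trace C = Matrix.trace (C * X) + Matrix.trace (C * Y) := by
      rw [← Matrix.trace_add, ← Matrix.mul_add]
      have : X + Y = 1 := by rw [hYdef]; abel
      rw [this, mul_one]
    rw [hfro]
    have h3 : Matrix.trace C ≤ k + (1/lam) * Matrix.trace (B * Y) := by
      rw [hsplit]; linarith
    have := mul_le_mul_of_nonneg_left h3 hlam.le
    rw [mul_add, ← mul_assoc, mul_one_div, div_self hlam.ne', one_mul] at this
    linarith [this]
  -- infimum argument
  have hSne : { e | ∃ X : Matrix (Fin n) (Fin n) ℝ, IsOrthProj k X ∧ e = frob2 (A - X * A) }.Nonempty := by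
    refine ⟨frob2 (A - 0 * A), 0, ⟨?_, ?_, ?_⟩, rfl⟩
    · simp
    · simp
    · simp
  have hTlb : lam * (Matrix.trace C - k) ≤ T := by
    rw [hT, tailNorm2]
    refine le_csInf hSne ?_
    rintro e ⟨X, hX, rfl⟩
    exact hbound X hX
  -- conclude
  rw [hsum]
  have hlamT : lam * k = T := by
    rw [hlamdef, div_mul_cancel₀ _ hk0.ne']
  nlinarith [hTlb, hlam, hk0, mul_pos hlam hk0]
end
end

section
/- Ridge leverage scores are monotone decreasing under column addition: for any A ∈ ℝ^{n×d} and any vector x ∈ ℝⁿ, letting A' = [A, x] be A with x appended as a new column, for every column index i of A we have τ̄_i(A') ≤ τ̄_i(A), where τ̄_i(M) = m_iᵀ(MMᵀ + (‖M - M_k‖_F²/k)I)⁺ m_i and m_i is the i-th column of M. -/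
open Matrix BigOperators

noncomputable section

-- auxiliary lemmas
lemma frob2_nonneg {m n : ℕ} (A : Matrix (Fin m) (Fin n) ℝ) : 0 ≤ frob2 A :=
  Finset.sum_nonneg fun _ _ => Finset.sum_nonneg fun _ _ => sq_nonneg _

lemma tail_set_nonempty {n d : ℕ} (k : ℕ) (A : Matrix (Fin n) (Fin d) ℝ) :
    Set.Nonempty { e | ∃ X : Matrix (Fin n) (Fin n) ℝ, IsOrthProj k X ∧ e = frob2 (A - X * A) } :=
  ⟨frob2 A, 0, ⟨by simp, by simp, by simp [Matrix.rank_zero]⟩, by simp⟩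

lemma tail_set_bdd {n d : ℕ} (k : ℕ) (A : Matrix (Fin n) (Fin d) ℝ) :
    BddBelow { e | ∃ X : Matrix (Fin n) (Fin n) ℝ, IsOrthProj k X ∧ e = frob2 (A - X * A) } :=
  ⟨0, fun e ⟨X, _, he⟩ => he ▸ frob2_nonneg _⟩

lemma pinv_of_posDef {n : ℕ} {M : Matrix (Fin n) (Fin n) ℝ} (hM : M.PosDef) :
    pinv M = M⁻¹ := by
  have hdet : IsUnit M.det := (Matrix.isUnit_iff_isUnit_det M).mp hM.isUnit
  have hmp : IsMoorePenrose M M⁻¹ := by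
    refine ⟨?_, ?_, ?_, ?_⟩
    · rw [Matrix.mul_nonsing_inv _ hdet, one_mul]
    · rw [Matrix.nonsing_inv_mul _ hdet, one_mul]
    · rw [Matrix.mul_nonsing_inv _ hdet, Matrix.transpose_one]
    · rw [Matrix.nonsing_inv_mul _ hdet, Matrix.transpose_one]
  have h : ∃ P, IsMoorePenrose M P := ⟨M⁻¹, hmp⟩
  have hspec := h.choose_spec
  have h1 : M * h.choose * M = M := hspec.1
  have key : h.choose = M⁻¹ := by
    calc h.choose = 1 * h.choose * 1 := by rw [one_mul, Matrix.mul_one]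
      _ = (M⁻¹ * M) * h.choose * (M * M⁻¹) := by
          rw [Matrix.nonsing_inv_mul _ hdet, Matrix.mul_nonsing_inv _ hdet]
      _ = M⁻¹ * (M * h.choose * M) * M⁻¹ := by simp only [Matrix.mul_assoc]
      _ = M⁻¹ * M * M⁻¹ := by rw [h1]
      _ = M⁻¹ := by rw [Matrix.nonsing_inv_mul _ hdet, one_mul]
  rw [pinv, dif_pos h, key]

lemma dot_symm {n : ℕ} {M : Matrix (Fin n) (Fin n) ℝ} (hs : Mᵀ = M) (v w : Fin n → ℝ) :
    v ⬝ᵥ (M *ᵥ w) = (M *ᵥ v) ⬝ᵥ w := by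
  rw [Matrix.dotProduct_mulVec, ← Matrix.mulVec_transpose, hs]

lemma quad_inv_mono {n : ℕ} {M M' : Matrix (Fin n) (Fin n) ℝ} (hM : M.PosDef) (hM' : M'.PosDef)
    (hle : (M' - M).PosSemidef) (a : Fin n → ℝ) :
    a ⬝ᵥ (M'⁻¹ *ᵥ a) ≤ a ⬝ᵥ (M⁻¹ *ᵥ a) := by
  have hdet : IsUnit M.det := (Matrix.isUnit_iff_isUnit_det M).mp hM.isUnit
  have hdet' : IsUnit M'.det := (Matrix.isUnit_iff_isUnit_det M').mp hM'.isUnit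
  set u := M'⁻¹ *ᵥ a with hu
  set w := M⁻¹ *ᵥ a with hw
  have hMw : M *ᵥ w = a := by
    rw [hw, Matrix.mulVec_mulVec, Matrix.mul_nonsing_inv _ hdet, Matrix.one_mulVec]
  have hM'u : M' *ᵥ u = a := by
    rw [hu, Matrix.mulVec_mulVec, Matrix.mul_nonsing_inv _ hdet', Matrix.one_mulVec]
  have hsym : Mᵀ = M := by
    have := hM.isHermitian
    rwa [Matrix.IsHermitian, Matrix.conjTranspose_eq_transpose_of_trivial] at this
  have h1 : 0 ≤ (u - w) ⬝ᵥ (M *ᵥ (u - w)) := by simpa using hM.posSemidef.dotProduct_mulVec_nonneg (u - w)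
  have h2 : 0 ≤ u ⬝ᵥ ((M' - M) *ᵥ u) := by simpa using hle.dotProduct_mulVec_nonneg u
  have e1 : u ⬝ᵥ (M *ᵥ w) = u ⬝ᵥ a := by rw [hMw]
  have e2 : w ⬝ᵥ (M *ᵥ u) = a ⬝ᵥ u := by rw [dot_symm hsym, hMw]
  have e3 : w ⬝ᵥ (M *ᵥ w) = w ⬝ᵥ a := by rw [hMw]
  have e4 : u ⬝ᵥ (M' *ᵥ u) = u ⬝ᵥ a := by rw [hM'u]
  have expand : (u - w) ⬝ᵥ (M *ᵥ (u - w)) =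
      u ⬝ᵥ (M *ᵥ u) - u ⬝ᵥ a - a ⬝ᵥ u + w ⬝ᵥ a := by
    rw [Matrix.mulVec_sub, sub_dotProduct, dotProduct_sub, dotProduct_sub,
      e1, e2, e3]
    ring
  have hsub : u ⬝ᵥ ((M' - M) *ᵥ u) = u ⬝ᵥ a - u ⬝ᵥ (M *ᵥ u) := by
    rw [Matrix.sub_mulVec, dotProduct_sub, e4]
  have hc1 : a ⬝ᵥ u = u ⬝ᵥ a := dotProduct_comm _ _
  have hc2 : a ⬝ᵥ w = w ⬝ᵥ a := dotProduct_comm _ _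
  rw [hc1, hc2]
  rw [expand] at h1
  rw [hsub] at h2
  linarith

lemma smul_one_posSemidef {n : ℕ} {c : ℝ} (hc : 0 ≤ c) :
    (c • (1 : Matrix (Fin n) (Fin n) ℝ)).PosSemidef := by
  refine Matrix.PosSemidef.of_dotProduct_mulVec_nonneg ?_ ?_
  · simp [Matrix.IsHermitian]
  · intro v
    have : (c • (1 : Matrix (Fin n) (Fin n) ℝ)) *ᵥ v = c • v := by
      rw [Matrix.smul_mulVec, Matrix.one_mulVec]
    rw [this]
    simp only [star_trivial, dotProduct_smul, smul_eq_mul]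
    exact mul_nonneg hc (by simpa using dotProduct_star_self_nonneg v)

lemma smul_one_posDef {n : ℕ} {c : ℝ} (hc : 0 < c) :
    (c • (1 : Matrix (Fin n) (Fin n) ℝ)).PosDef := by
  refine Matrix.PosDef.of_dotProduct_mulVec_pos ?_ ?_
  · simp [Matrix.IsHermitian]
  · intro v hv
    have : (c • (1 : Matrix (Fin n) (Fin n) ℝ)) *ᵥ v = c • v := by
      rw [Matrix.smul_mulVec, Matrix.one_mulVec]
    rw [this]
    simp only [star_trivial, dotProduct_smul, smul_eq_mul]
    refine mul_pos hc ?_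
    have := Matrix.dotProduct_star_self_pos_iff (v := v)
    simp only [star_trivial] at this
    exact this.mpr hv

lemma ridge_posDef {n d : ℕ} {c : ℝ} (hc : 0 < c) (A : Matrix (Fin n) (Fin d) ℝ) :
    (A * Aᵀ + c • (1 : Matrix (Fin n) (Fin n) ℝ)).PosDef := by
  have h1 : (A * Aᵀ).PosSemidef := by
    have := Matrix.posSemidef_self_mul_conjTranspose A
    rwa [Matrix.conjTranspose_eq_transpose_of_trivial] at this
  exact Matrix.PosDef.posSemidef_add h1 (smul_one_posDef hc)

lemma vecMulVec_posSemidef {n : ℕ} (x : Fin n → ℝ) : (Matrix.vecMulVec x x).PosSemidef := by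
  rw [Matrix.vecMulVec_eq (Fin 1)]
  have := Matrix.posSemidef_self_mul_conjTranspose (Matrix.replicateCol (Fin 1) x)
  rwa [Matrix.conjTranspose_replicateCol, star_trivial] at this

lemma tail_mono {n d k : ℕ} (A : Matrix (Fin n) (Fin d) ℝ) (x : Fin n → ℝ) :
    tailNorm2 k A ≤ tailNorm2 k (Matrix.of fun r (j : Fin (d + 1)) =>
      Fin.snoc (α := fun _ : Fin (d+1) => ℝ) (fun t : Fin d => A r t) (x r) j) := by
  set A' : Matrix (Fin n) (Fin (d+1)) ℝ := Matrix.of fun r (j : Fin (d + 1)) =>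
      Fin.snoc (α := fun _ : Fin (d+1) => ℝ) (fun t : Fin d => A r t) (x r) j with hA'
  refine le_csInf (tail_set_nonempty k A') ?_
  rintro e ⟨X, hX, rfl⟩
  have key : ∀ r (t : Fin d), (A' - X * A') r t.castSucc = (A - X * A) r t := by
    intro r t
    have hcol : ∀ s, A' s t.castSucc = A s t := fun s => by
      simp [hA', Fin.snoc_castSucc]
    simp only [Matrix.sub_apply, Matrix.mul_apply, hcol]
  calc tailNorm2 k A ≤ frob2 (A - X * A) := csInf_le (tail_set_bdd k A) ⟨X, hX, rfl⟩
    _ ≤ frob2 (A' - X * A') := by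
        unfold frob2
        refine Finset.sum_le_sum fun r _ => ?_
        rw [Fin.sum_univ_castSucc]
        have h : ∑ t : Fin d, ((A - X * A) r t) ^ 2
            = ∑ t : Fin d, ((A' - X * A') r t.castSucc) ^ 2 :=
          Finset.sum_congr rfl fun t _ => by rw [key r t]
        rw [h]
        exact le_add_of_nonneg_right (sq_nonneg _)

lemma snoc_mul_transpose {n d : ℕ} (A : Matrix (Fin n) (Fin d) ℝ) (x : Fin n → ℝ) :
    (Matrix.of fun r (j : Fin (d + 1)) =>
        Fin.snoc (α := fun _ : Fin (d+1) => ℝ) (fun t : Fin d => A r t) (x r) j) *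
      (Matrix.of fun r (j : Fin (d + 1)) =>
        Fin.snoc (α := fun _ : Fin (d+1) => ℝ) (fun t : Fin d => A r t) (x r) j)ᵀ
    = A * Aᵀ + Matrix.vecMulVec x x := by
  ext r s
  simp [Matrix.mul_apply, Fin.sum_univ_castSucc, Matrix.vecMulVec_apply]


theorem ridgeScore_mono_column_append {n d k : ℕ} (hk : 1 ≤ k)
    (A : Matrix (Fin n) (Fin d) ℝ) (x : Fin n → ℝ) (htail : 0 < tailNorm2 k A) :
    ∀ i : Fin d,
      ridgeScore k (Matrix.of fun r (j : Fin (d + 1)) => Fin.snoc (α := fun _ : Fin (d+1) => ℝ) (fun t : Fin d => A r t) (x r) j)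
          i.castSucc
        ≤ ridgeScore k A i := by
  intro i
  set A' : Matrix (Fin n) (Fin (d+1)) ℝ := Matrix.of fun r (j : Fin (d + 1)) =>
      Fin.snoc (α := fun _ : Fin (d+1) => ℝ) (fun t : Fin d => A r t) (x r) j with hA'
  have hk0 : (0:ℝ) < (k : ℝ) := by exact_mod_cast hk
  have hlam : 0 < tailNorm2 k A / (k : ℝ) := div_pos htail hk0
  have htm : tailNorm2 k A ≤ tailNorm2 k A' := tail_mono A x
  have hlamle : tailNorm2 k A / (k : ℝ) ≤ tailNorm2 k A' / (k : ℝ) := by gcongr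
  have hlam' : 0 < tailNorm2 k A' / (k : ℝ) := lt_of_lt_of_le hlam hlamle
  have hMpd := ridge_posDef hlam A
  have hM'pd := ridge_posDef hlam' A'
  have hcol : (fun r => A' r i.castSucc) = (fun r => A r i) := by
    funext r; simp [hA', Fin.snoc_castSucc]
  unfold ridgeScore _root_.col
  rw [hcol, pinv_of_posDef hMpd, pinv_of_posDef hM'pd]
  refine quad_inv_mono hMpd hM'pd ?_ _
  have hdiff : (A' * A'ᵀ + (tailNorm2 k A' / (k : ℝ)) • (1 : Matrix (Fin n) (Fin n) ℝ))
      - (A * Aᵀ + (tailNorm2 k A / (k : ℝ)) • (1 : Matrix (Fin n) (Fin n) ℝ))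
      = Matrix.vecMulVec x x
        + ((tailNorm2 k A' / (k : ℝ) - tailNorm2 k A / (k : ℝ)) • (1 : Matrix (Fin n) (Fin n) ℝ)) := by
    rw [hA', snoc_mul_transpose, sub_smul]
    abel
  rw [hdiff]
  exact (vecMulVec_posSemidef x).add (smul_one_posSemidef (sub_nonneg.mpr hlamle))
end
end

section
/- Assume for ε ≤ 1/2: (i) the spectral sandwich (1−ε)CCᵀ − (ε/k)‖A−A_k‖_F²·I ⪯ AAᵀ ⪯ (1+ε)CCᵀ + (ε/k)‖A−A_k‖_F²·I, and (ii) (1−ε)‖A−A_k‖_F² ≤ ‖C−C_k‖_F² ≤ (1+ε)‖A−A_k‖_F². Then the PSD ordering (1−4ε)(CCᵀ + (‖C−C_k‖_F²/k)I) ⪯ AAᵀ + (‖A−A_k‖_F²/k)I ⪯ (1+4ε)(CCᵀ + (‖C−C_k‖_F²/k)I) holds. -/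
open Matrix BigOperators

noncomputable section

lemma psd_smul {n : ℕ} {M : Matrix (Fin n) (Fin n) ℝ} (hM : M.PosSemidef) {c : ℝ}
    (hc : 0 ≤ c) : (c • M).PosSemidef := by
  refine ⟨?_, fun x => ?_⟩
  · show (c • M)ᴴ = c • M
    rw [Matrix.conjTranspose_smul, hM.1.eq]
    norm_num
  · have h := mul_nonneg hc (hM.2 x)
    simp only [Finsupp.mul_sum] at h
    simp only [Matrix.smul_apply, smul_eq_mul]
    convert h using 1
    refine Finsupp.sum_congr fun i _ => Finsupp.sum_congr fun j _ => ?_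
    ring

lemma tailNorm2_nonneg {n d k : ℕ} (A : Matrix (Fin n) (Fin d) ℝ) :
    0 ≤ tailNorm2 k A := by
  apply Real.sInf_nonneg
  rintro e ⟨X, -, rfl⟩
  exact Finset.sum_nonneg fun i _ => Finset.sum_nonneg fun j _ => sq_nonneg _

lemma psd_mul_transpose {n d : ℕ} (A : Matrix (Fin n) (Fin d) ℝ) :
    (A * Aᵀ).PosSemidef := by
  rw [← Matrix.conjTranspose_eq_transpose_of_trivial]
  exact Matrix.posSemidef_self_mul_conjTranspose A

theorem ridge_regularized_spectral_close {n d d' k : ℕ} (hk : 1 ≤ k)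
    (A : Matrix (Fin n) (Fin d) ℝ) (C : Matrix (Fin n) (Fin d') ℝ)
    (eps : ℝ) (heps : 0 < eps) (heps2 : eps ≤ 1 / 2)
    (h1 : lle ((1 - eps) • (C * Cᵀ) -
        (eps / (k : ℝ) * tailNorm2 k A) • (1 : Matrix (Fin n) (Fin n) ℝ)) (A * Aᵀ))
    (h2 : lle (A * Aᵀ) ((1 + eps) • (C * Cᵀ) +
        (eps / (k : ℝ) * tailNorm2 k A) • (1 : Matrix (Fin n) (Fin n) ℝ)))
    (h3 : (1 - eps) * tailNorm2 k A ≤ tailNorm2 k C)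
    (h4 : tailNorm2 k C ≤ (1 + eps) * tailNorm2 k A) :
    lle ((1 - 4 * eps) • (C * Cᵀ + (tailNorm2 k C / (k : ℝ)) • (1 : Matrix (Fin n) (Fin n) ℝ)))
        (A * Aᵀ + (tailNorm2 k A / (k : ℝ)) • (1 : Matrix (Fin n) (Fin n) ℝ)) ∧
      lle (A * Aᵀ + (tailNorm2 k A / (k : ℝ)) • (1 : Matrix (Fin n) (Fin n) ℝ))
        ((1 + 4 * eps) • (C * Cᵀ + (tailNorm2 k C / (k : ℝ)) • (1 : Matrix (Fin n) (Fin n) ℝ))) := by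
  have hT : 0 ≤ tailNorm2 k A := tailNorm2_nonneg A
  have hS : 0 ≤ tailNorm2 k C := tailNorm2_nonneg C
  have hkpos : (0:ℝ) < (k:ℝ) := by exact_mod_cast hk
  set T := tailNorm2 k A with hTdef
  set S := tailNorm2 k C with hSdef
  have hCC := psd_mul_transpose C
  constructor
  · show (_ : Matrix (Fin n) (Fin n) ℝ).PosSemidef
    have key : A * Aᵀ + (T / (k:ℝ)) • (1 : Matrix (Fin n) (Fin n) ℝ) -
        (1 - 4 * eps) • (C * Cᵀ + (S / (k:ℝ)) • (1 : Matrix (Fin n) (Fin n) ℝ)) =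
        (A * Aᵀ - ((1 - eps) • (C * Cᵀ) - (eps / (k:ℝ) * T) • (1 : Matrix (Fin n) (Fin n) ℝ)))
        + (3 * eps) • (C * Cᵀ)
        + ((T / (k:ℝ) - (1 - 4 * eps) * (S / (k:ℝ)) - eps / (k:ℝ) * T)) •
            (1 : Matrix (Fin n) (Fin n) ℝ) := by
      module
    rw [key]
    have hc : 0 ≤ T / (k:ℝ) - (1 - 4 * eps) * (S / (k:ℝ)) - eps / (k:ℝ) * T := by
      have h5 : 0 ≤ T - (1 - 4 * eps) * S - eps * T := by
        rcases le_or_gt (1 - 4 * eps) 0 with h | h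
        · nlinarith
        · nlinarith
      have heq : T / (k:ℝ) - (1 - 4 * eps) * (S / (k:ℝ)) - eps / (k:ℝ) * T =
          (T - (1 - 4 * eps) * S - eps * T) / (k:ℝ) := by ring
      rw [heq]
      exact div_nonneg h5 hkpos.le
    exact ((h1.add (psd_smul hCC (by linarith))).add (psd_smul Matrix.PosSemidef.one hc))
  · show (_ : Matrix (Fin n) (Fin n) ℝ).PosSemidef
    have key : (1 + 4 * eps) • (C * Cᵀ + (S / (k:ℝ)) • (1 : Matrix (Fin n) (Fin n) ℝ)) -
        (A * Aᵀ + (T / (k:ℝ)) • (1 : Matrix (Fin n) (Fin n) ℝ)) =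
        (((1 + eps) • (C * Cᵀ) + (eps / (k:ℝ) * T) • (1 : Matrix (Fin n) (Fin n) ℝ)) - A * Aᵀ)
        + (3 * eps) • (C * Cᵀ)
        + (((1 + 4 * eps) * (S / (k:ℝ)) - eps / (k:ℝ) * T - T / (k:ℝ))) •
            (1 : Matrix (Fin n) (Fin n) ℝ) := by
      module
    rw [key]
    have hc : 0 ≤ (1 + 4 * eps) * (S / (k:ℝ)) - eps / (k:ℝ) * T - T / (k:ℝ) := by
      have h5 : 0 ≤ (1 + 4 * eps) * S - eps * T - T := by nlinarith
      have heq : (1 + 4 * eps) * (S / (k:ℝ)) - eps / (k:ℝ) * T - T / (k:ℝ) =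
          ((1 + 4 * eps) * S - eps * T - T) / (k:ℝ) := by ring
      rw [heq]
      exact div_nonneg h5 hkpos.le
    exact ((h2.add (psd_smul hCC (by linarith))).add (psd_smul Matrix.PosSemidef.one hc))
end
end

section
/- Under the hypotheses of the previous statement (ε ≤ 1/2, spectral sandwich and tail norm comparability between C and A), the ridge leverage scores computed with respect to C approximate those of A: for all columns aᵢ of A, (1−4ε)·τ̄_i(A) ≤ aᵢᵀ(CCᵀ + (‖C−C_k‖_F²/k)I)⁺aᵢ ≤ (1+4ε)·τ̄_i(A), provided ‖A−A_k‖_F² > 0. -/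
open Matrix BigOperators

noncomputable section

namespace RidgeAux

variable {n : ℕ}

lemma herm_symm {M : Matrix (Fin n) (Fin n) ℝ} (h : M.IsHermitian) : Mᵀ = M := by
  rw [← Matrix.conjTranspose_eq_transpose_of_trivial]; exact h

lemma symm_dot {M : Matrix (Fin n) (Fin n) ℝ} (hM : Mᵀ = M) (v w : Fin n → ℝ) :
    v ⬝ᵥ M *ᵥ w = (M *ᵥ v) ⬝ᵥ w := by
  rw [Matrix.dotProduct_mulVec, ← Matrix.mulVec_transpose, hM]

lemma pinv_eq_inv {M : Matrix (Fin n) (Fin n) ℝ} (hM : IsUnit M.det) : pinv M = M⁻¹ := by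
  classical
  have hmp : IsMoorePenrose M M⁻¹ := by
    refine ⟨?_, ?_, ?_, ?_⟩
    · rw [Matrix.mul_nonsing_inv M hM, one_mul]
    · rw [Matrix.nonsing_inv_mul M hM, one_mul]
    · rw [Matrix.mul_nonsing_inv M hM, Matrix.transpose_one]
    · rw [Matrix.nonsing_inv_mul M hM, Matrix.transpose_one]
  have hex : ∃ P, IsMoorePenrose M P := ⟨M⁻¹, hmp⟩
  unfold pinv
  rw [dif_pos hex]
  have h1 := hex.choose_spec.1
  calc hex.choose = (M⁻¹ * M) * hex.choose * (M * M⁻¹) := by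
        rw [Matrix.nonsing_inv_mul M hM, Matrix.mul_nonsing_inv M hM, one_mul, mul_one]
    _ = M⁻¹ * (M * hex.choose * M) * M⁻¹ := by simp only [Matrix.mul_assoc]
    _ = M⁻¹ * M * M⁻¹ := by rw [h1]
    _ = M⁻¹ := by rw [Matrix.nonsing_inv_mul M hM, one_mul]

lemma posDef_reg {d : ℕ} (B : Matrix (Fin n) (Fin d) ℝ) {c : ℝ} (hc : 0 < c) :
    (B * Bᵀ + c • (1 : Matrix (Fin n) (Fin n) ℝ)).PosDef := by
  have h1 : (B * Bᵀ).PosSemidef := by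
    have := Matrix.posSemidef_self_mul_conjTranspose B
    rwa [Matrix.conjTranspose_eq_transpose_of_trivial] at this
  have h2 : (c • (1 : Matrix (Fin n) (Fin n) ℝ)).PosDef := by
    apply Matrix.PosDef.of_dotProduct_mulVec_pos
    · unfold Matrix.IsHermitian
      rw [Matrix.conjTranspose_smul, Matrix.conjTranspose_one]
      simp
    · intro x hx
      have hxx : 0 < x ⬝ᵥ x := by
        rcases lt_or_eq_of_le (dotProduct_star_self_nonneg x) with h | h
        · simpa using h
        · exfalso; apply hx
          have : x ⬝ᵥ x = 0 := by simpa using h.symm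
          exact dotProduct_self_eq_zero.mp this
      simp only [Matrix.smul_mulVec, Matrix.one_mulVec, dotProduct_smul,
        smul_eq_mul, star_trivial]
      exact mul_pos hc hxx
  exact h2.posSemidef_add h1

/-- Anti-monotonicity of the inverse, quadratic-form version with a scale factor. -/
lemma inv_qf_le {M N : Matrix (Fin n) (Fin n) ℝ} (hM : M.PosDef) (hN : N.PosDef)
    {c : ℝ} (hc : 0 < c) (h : ∀ x, x ⬝ᵥ M *ᵥ x ≤ c * (x ⬝ᵥ N *ᵥ x)) (x : Fin n → ℝ) :
    x ⬝ᵥ N⁻¹ *ᵥ x ≤ c * (x ⬝ᵥ M⁻¹ *ᵥ x) := by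
  have hMd : IsUnit M.det := hM.det_pos.ne'.isUnit
  have hNd : IsUnit N.det := hN.det_pos.ne'.isUnit
  have hMs : Mᵀ = M := herm_symm hM.1
  set w : Fin n → ℝ := M⁻¹ *ᵥ x with hw
  set y : Fin n → ℝ := c⁻¹ • (N⁻¹ *ᵥ x) with hy
  set p : ℝ := x ⬝ᵥ M⁻¹ *ᵥ x with hp
  set q : ℝ := x ⬝ᵥ N⁻¹ *ᵥ x with hq
  have hMw : M *ᵥ w = x := by
    rw [hw, Matrix.mulVec_mulVec, Matrix.mul_nonsing_inv M hMd, Matrix.one_mulVec]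
  have hNx : N *ᵥ (N⁻¹ *ᵥ x) = x := by
    rw [Matrix.mulVec_mulVec, Matrix.mul_nonsing_inv N hNd, Matrix.one_mulVec]
  have e1 : y ⬝ᵥ x = c⁻¹ * q := by
    rw [hy, smul_dotProduct, smul_eq_mul, dotProduct_comm, hq]
  have e3 : w ⬝ᵥ x = p := by rw [hw, dotProduct_comm, hp]
  have eyNy : y ⬝ᵥ N *ᵥ y = c⁻¹ * (c⁻¹ * q) := by
    rw [hy, Matrix.mulVec_smul, hNx, smul_dotProduct, dotProduct_smul,
      smul_eq_mul, smul_eq_mul, dotProduct_comm, ← hq]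
  have h0 : 0 ≤ (y - w) ⬝ᵥ M *ᵥ (y - w) := by
    have := hM.posSemidef.dotProduct_mulVec_nonneg (y - w)
    simpa using this
  have expand : (y - w) ⬝ᵥ M *ᵥ (y - w)
      = y ⬝ᵥ M *ᵥ y - 2 * (c⁻¹ * q) + p := by
    have e2 : w ⬝ᵥ M *ᵥ y = c⁻¹ * q := by
      rw [symm_dot hMs, hMw, dotProduct_comm, e1]
    have e4 : y ⬝ᵥ M *ᵥ w = c⁻¹ * q := by rw [hMw, e1]
    have e5 : w ⬝ᵥ M *ᵥ w = p := by rw [hMw, e3]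
    rw [Matrix.mulVec_sub, dotProduct_sub, sub_dotProduct,
      sub_dotProduct, e2, e4, e5]
    ring
  have hyy : y ⬝ᵥ M *ᵥ y ≤ c * (c⁻¹ * (c⁻¹ * q)) := by
    have := h y; rwa [eyNy] at this
  rw [expand] at h0
  have hcc : c * (c⁻¹ * (c⁻¹ * q)) = c⁻¹ * q := by field_simp
  rw [hcc] at hyy
  have hq' : c⁻¹ * q ≤ p := by linarith
  calc q = c * (c⁻¹ * q) := by field_simp
    _ ≤ c * p := mul_le_mul_of_nonneg_left hq' hc.le

end RidgeAux

lemma lle_qf {n : ℕ} {M N : Matrix (Fin n) (Fin n) ℝ} (h : lle M N) (z : Fin n → ℝ) :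
    z ⬝ᵥ M *ᵥ z ≤ z ⬝ᵥ N *ᵥ z := by
  unfold lle at h
  have := h.dotProduct_mulVec_nonneg z
  simp only [star_trivial, Matrix.sub_mulVec, dotProduct_sub] at this
  linarith

theorem ridgeScore_approx_of_sample {n d d' k : ℕ} (hk : 1 ≤ k)
    (A : Matrix (Fin n) (Fin d) ℝ) (C : Matrix (Fin n) (Fin d') ℝ)
    (eps : ℝ) (heps : 0 < eps) (heps2 : eps ≤ 1 / 2)
    (htail : 0 < tailNorm2 k A)
    (h1 : lle ((1 - eps) • (C * Cᵀ) -
        (eps / (k : ℝ) * tailNorm2 k A) • (1 : Matrix (Fin n) (Fin n) ℝ)) (A * Aᵀ))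
    (h2 : lle (A * Aᵀ) ((1 + eps) • (C * Cᵀ) +
        (eps / (k : ℝ) * tailNorm2 k A) • (1 : Matrix (Fin n) (Fin n) ℝ)))
    (h3 : (1 - eps) * tailNorm2 k A ≤ tailNorm2 k C)
    (h4 : tailNorm2 k C ≤ (1 + eps) * tailNorm2 k A) :
    ∀ i : Fin d,
      (1 - 4 * eps) * (_root_.col A i ⬝ᵥ
          ((A * Aᵀ + (tailNorm2 k A / (k : ℝ)) • (1 : Matrix (Fin n) (Fin n) ℝ))⁻¹ *ᵥ _root_.col A i))
        ≤ _root_.col A i ⬝ᵥ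
          (pinv (C * Cᵀ + (tailNorm2 k C / (k : ℝ)) • (1 : Matrix (Fin n) (Fin n) ℝ)) *ᵥ _root_.col A i) ∧
      _root_.col A i ⬝ᵥ
          (pinv (C * Cᵀ + (tailNorm2 k C / (k : ℝ)) • (1 : Matrix (Fin n) (Fin n) ℝ)) *ᵥ _root_.col A i)
        ≤ (1 + 4 * eps) * (_root_.col A i ⬝ᵥ
          ((A * Aᵀ + (tailNorm2 k A / (k : ℝ)) • (1 : Matrix (Fin n) (Fin n) ℝ))⁻¹ *ᵥ _root_.col A i)) := by
  intro i
  set x := _root_.col A i with hxdef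
  set t := tailNorm2 k A with htdef
  set s := tailNorm2 k C with hsdef
  have hk0 : (0:ℝ) < (k:ℝ) := by exact_mod_cast Nat.lt_of_lt_of_le Nat.zero_lt_one hk
  have hinv : (0:ℝ) ≤ ((k:ℝ))⁻¹ := (inv_pos.mpr hk0).le
  have hs0 : 0 < s := lt_of_lt_of_le (by nlinarith) h3
  set RA := A * Aᵀ + (t / (k:ℝ)) • (1 : Matrix (Fin n) (Fin n) ℝ) with hRAdef
  set RC := C * Cᵀ + (s / (k:ℝ)) • (1 : Matrix (Fin n) (Fin n) ℝ) with hRCdef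
  have hPA : RA.PosDef := RidgeAux.posDef_reg A (div_pos htail hk0)
  have hPC : RC.PosDef := RidgeAux.posDef_reg C (div_pos hs0 hk0)
  rw [RidgeAux.pinv_eq_inv hPC.det_pos.ne'.isUnit]
  -- basic quadratic form facts
  have hqI : ∀ z : Fin n → ℝ, 0 ≤ z ⬝ᵥ z := by
    intro z
    have := dotProduct_star_self_nonneg z
    simpa using this
  have hqC : ∀ z : Fin n → ℝ, 0 ≤ z ⬝ᵥ (C * Cᵀ) *ᵥ z := by
    intro z
    have h' := (Matrix.posSemidef_self_mul_conjTranspose C).dotProduct_mulVec_nonneg z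
    rw [Matrix.conjTranspose_eq_transpose_of_trivial] at h'
    simpa using h'
  have eRA : ∀ z : Fin n → ℝ, z ⬝ᵥ RA *ᵥ z
      = z ⬝ᵥ (A * Aᵀ) *ᵥ z + (t / (k:ℝ)) * (z ⬝ᵥ z) := by
    intro z
    rw [hRAdef]
    simp [Matrix.add_mulVec, Matrix.smul_mulVec, Matrix.one_mulVec,
      dotProduct_add, dotProduct_smul, smul_eq_mul]
  have eRC : ∀ z : Fin n → ℝ, z ⬝ᵥ RC *ᵥ z
      = z ⬝ᵥ (C * Cᵀ) *ᵥ z + (s / (k:ℝ)) * (z ⬝ᵥ z) := by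
    intro z
    rw [hRCdef]
    simp [Matrix.add_mulVec, Matrix.smul_mulVec, Matrix.one_mulVec,
      dotProduct_add, dotProduct_smul, smul_eq_mul]
  have hq2 : ∀ z : Fin n → ℝ, z ⬝ᵥ (A * Aᵀ) *ᵥ z
      ≤ (1 + eps) * (z ⬝ᵥ (C * Cᵀ) *ᵥ z) + (eps / (k:ℝ) * t) * (z ⬝ᵥ z) := by
    intro z
    have h' := lle_qf h2 z
    simp only [Matrix.add_mulVec, Matrix.smul_mulVec, Matrix.one_mulVec,
      dotProduct_add, dotProduct_smul, smul_eq_mul] at h'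
    linarith
  have hq1 : ∀ z : Fin n → ℝ, (1 - eps) * (z ⬝ᵥ (C * Cᵀ) *ᵥ z)
      - (eps / (k:ℝ) * t) * (z ⬝ᵥ z) ≤ z ⬝ᵥ (A * Aᵀ) *ᵥ z := by
    intro z
    have h' := lle_qf h1 z
    simp only [Matrix.sub_mulVec, Matrix.smul_mulVec, Matrix.one_mulVec,
      dotProduct_sub, dotProduct_smul, smul_eq_mul] at h'
    linarith
  -- scalar key inequalities
  have hkey1 : (1 + eps) * (t / (k:ℝ)) ≤ (1 + 4 * eps) * (s / (k:ℝ)) := by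
    have key : (1 + eps) * t ≤ (1 + 4 * eps) * s := by
      nlinarith [mul_le_mul_of_nonneg_left h3 (by linarith : (0:ℝ) ≤ 1 + 4 * eps),
        mul_nonneg (mul_nonneg heps.le (by linarith : (0:ℝ) ≤ 1 - 2 * eps)) htail.le]
    calc (1 + eps) * (t / (k:ℝ)) = (1 + eps) * t * ((k:ℝ))⁻¹ := by ring
      _ ≤ (1 + 4 * eps) * s * ((k:ℝ))⁻¹ := mul_le_mul_of_nonneg_right key hinv
      _ = (1 + 4 * eps) * (s / (k:ℝ)) := by ring
  -- upper bound
  have hup : ∀ z : Fin n → ℝ, z ⬝ᵥ RA *ᵥ z ≤ (1 + 4 * eps) * (z ⬝ᵥ RC *ᵥ z) := by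
    intro z
    rw [eRA z, eRC z]
    have h2z := hq2 z
    have hCz := hqC z
    have hIz := hqI z
    have e : eps / (k:ℝ) * t = eps * (t / (k:ℝ)) := by ring
    rw [e] at h2z
    nlinarith [mul_nonneg heps.le hCz, mul_nonneg (sub_nonneg.mpr hkey1) hIz]
  have hub := RidgeAux.inv_qf_le hPA hPC (by linarith : (0:ℝ) < 1 + 4 * eps) hup x
  refine ⟨?_, hub⟩
  -- lower bound
  rcases le_or_gt (1 - 4 * eps) 0 with hneg | hpos
  · have q0 : 0 ≤ x ⬝ᵥ RC⁻¹ *ᵥ x := by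
      have := hPC.inv.posSemidef.dotProduct_mulVec_nonneg x; simpa using this
    have p0 : 0 ≤ x ⬝ᵥ RA⁻¹ *ᵥ x := by
      have := hPA.inv.posSemidef.dotProduct_mulVec_nonneg x; simpa using this
    nlinarith
  · have hkey2 : (1 - 4 * eps) * (s / (k:ℝ)) + eps * (t / (k:ℝ)) ≤ t / (k:ℝ) := by
      have key : (1 - 4 * eps) * s + eps * t ≤ t := by
        nlinarith [mul_le_mul_of_nonneg_left h4 hpos.le,
          mul_nonneg (mul_nonneg heps.le (by linarith : (0:ℝ) ≤ 1 + 2 * eps)) htail.le]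
      calc (1 - 4 * eps) * (s / (k:ℝ)) + eps * (t / (k:ℝ))
          = ((1 - 4 * eps) * s + eps * t) * ((k:ℝ))⁻¹ := by ring
        _ ≤ t * ((k:ℝ))⁻¹ := mul_le_mul_of_nonneg_right key hinv
        _ = t / (k:ℝ) := by ring
    have hdn : ∀ z : Fin n → ℝ, z ⬝ᵥ RC *ᵥ z ≤ (1 - 4 * eps)⁻¹ * (z ⬝ᵥ RA *ᵥ z) := by
      intro z
      have hlow : (1 - 4 * eps) * (z ⬝ᵥ RC *ᵥ z) ≤ z ⬝ᵥ RA *ᵥ z := by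
        rw [eRA z, eRC z]
        have h1z := hq1 z
        have hCz := hqC z
        have hIz := hqI z
        have e : eps / (k:ℝ) * t = eps * (t / (k:ℝ)) := by ring
        rw [e] at h1z
        nlinarith [mul_nonneg heps.le hCz, mul_nonneg (sub_nonneg.mpr hkey2) hIz]
      have h' := mul_le_mul_of_nonneg_left hlow (inv_pos.mpr hpos).le
      calc z ⬝ᵥ RC *ᵥ z = (1 - 4 * eps)⁻¹ * ((1 - 4 * eps) * (z ⬝ᵥ RC *ᵥ z)) := by
            field_simp
        _ ≤ (1 - 4 * eps)⁻¹ * (z ⬝ᵥ RA *ᵥ z) := h'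
    have hlb := RidgeAux.inv_qf_le hPC hPA (inv_pos.mpr hpos) hdn x
    have h' := mul_le_mul_of_nonneg_left hlb hpos.le
    calc (1 - 4 * eps) * (x ⬝ᵥ RA⁻¹ *ᵥ x)
        ≤ (1 - 4 * eps) * ((1 - 4 * eps)⁻¹ * (x ⬝ᵥ RC⁻¹ *ᵥ x)) := h'
      _ = x ⬝ᵥ RC⁻¹ *ᵥ x := by field_simp
end
end

section
/- Pseudoinverse with ridge via orthogonal decomposition: let C ∈ ℝ^{n×r}, let R ∈ ℝ^{n×r'} be an orthonormal basis for the column span of C (so RRᵀ is the orthogonal projection onto range(C)), and let λ > 0. Then (CCᵀ + λI)⁻¹ = (CCᵀ + λRRᵀ)⁺ + (1/λ)(I − RRᵀ). -/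
open Matrix BigOperators

noncomputable section

lemma mp_unique {n : ℕ} {A P Q : Matrix (Fin n) (Fin n) ℝ}
    (hP : IsMoorePenrose A P) (hQ : IsMoorePenrose A Q) : P = Q := by
  obtain ⟨hP1, hP2, hP3, hP4⟩ := hP
  obtain ⟨hQ1, hQ2, hQ3, hQ4⟩ := hQ
  have hAP : A * P = A * Q := by
    calc A * P = (A * Q)ᵀ * (A * P)ᵀ := by
          rw [hQ3, hP3, ← Matrix.mul_assoc, hQ1]
    _ = ((A * P) * (A * Q))ᵀ := (Matrix.transpose_mul _ _).symm
    _ = (A * Q)ᵀ := by rw [← Matrix.mul_assoc, hP1]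
    _ = A * Q := hQ3
  have hPA : P * A = Q * A := by
    calc P * A = (P * A)ᵀ * (Q * A)ᵀ := by
          rw [hP4, hQ4, Matrix.mul_assoc, ← Matrix.mul_assoc A Q A, hQ1]
    _ = ((Q * A) * (P * A))ᵀ := (Matrix.transpose_mul _ _).symm
    _ = (Q * A)ᵀ := by rw [Matrix.mul_assoc Q A, ← Matrix.mul_assoc A P A, hP1]
    _ = Q * A := hQ4
  calc P = P * A * P := hP2.symm
  _ = Q * A * P := by rw [hPA]
  _ = Q * (A * Q) := by rw [Matrix.mul_assoc, hAP]
  _ = Q := by rw [← Matrix.mul_assoc, hQ2]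

lemma pinv_eq {n : ℕ} {A P : Matrix (Fin n) (Fin n) ℝ} (hP : IsMoorePenrose A P) :
    pinv A = P := by
  have h : ∃ Q, IsMoorePenrose A Q := ⟨P, hP⟩
  rw [pinv, dif_pos h]
  exact mp_unique h.choose_spec hP

theorem inv_ridge_orthogonal_decomposition {n r r' : ℕ}
    (C : Matrix (Fin n) (Fin r) ℝ) (R : Matrix (Fin n) (Fin r') ℝ)
    (hR : Rᵀ * R = 1)
    (hspan : LinearMap.range R.mulVecLin = LinearMap.range C.mulVecLin)
    (lam : ℝ) (hlam : 0 < lam) :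
    (C * Cᵀ + lam • (1 : Matrix (Fin n) (Fin n) ℝ))⁻¹
      = pinv (C * Cᵀ + lam • (R * Rᵀ)) + (1 / lam) • (1 - R * Rᵀ) := by
  set P : Matrix (Fin n) (Fin n) ℝ := R * Rᵀ with hPdef
  have hPsym : Pᵀ = P := by simp [hPdef, Matrix.transpose_mul]
  have hPP : P * P = P := by
    rw [hPdef, Matrix.mul_assoc, ← Matrix.mul_assoc Rᵀ R, hR, Matrix.one_mul]
  -- P * C = C
  have hPC : P * C = C := by
    ext i j
    have hmem : C *ᵥ Pi.single j 1 ∈ LinearMap.range R.mulVecLin := by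
      rw [hspan]; exact ⟨Pi.single j 1, rfl⟩
    obtain ⟨w, hw⟩ := hmem
    have hw' : R *ᵥ w = C *ᵥ Pi.single j 1 := hw
    have h1 : (P * C) *ᵥ Pi.single j 1 = C *ᵥ Pi.single j 1 := by
      rw [← Matrix.mulVec_mulVec, ← hw', Matrix.mulVec_mulVec, hPdef,
        Matrix.mul_assoc, hR, Matrix.mul_one, hw']
    have := congrFun h1 i
    simpa [Matrix.mulVec_single] using this
  have hCtP : Cᵀ * P = Cᵀ := by
    have := congrArg Matrix.transpose hPC
    rwa [Matrix.transpose_mul, hPsym] at this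
  set A : Matrix (Fin n) (Fin n) ℝ := C * Cᵀ + lam • 1 with hAdef
  set M : Matrix (Fin n) (Fin n) ℝ := C * Cᵀ + lam • P with hMdef
  -- A is invertible
  have hApd : A.PosDef := by
    apply Matrix.PosDef.posSemidef_add
    · have := Matrix.posSemidef_self_mul_conjTranspose C
      simpa using this
    · refine Matrix.PosDef.of_dotProduct_mulVec_pos ?_ (fun x hx => ?_)
      · simp [Matrix.IsHermitian]
      · have hxx : 0 < star x ⬝ᵥ x := Matrix.dotProduct_star_self_pos_iff.mpr hx
        simp only [Matrix.smul_mulVec, Matrix.one_mulVec, dotProduct_smul, smul_eq_mul]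
        exact mul_pos hlam hxx
  have hAunit : IsUnit A.det := hApd.det_pos.ne'.isUnit
  have hAinv : A * A⁻¹ = 1 := Matrix.mul_nonsing_inv A hAunit
  have hAinv' : A⁻¹ * A = 1 := Matrix.nonsing_inv_mul A hAunit
  -- key products
  have hMP : M * P = M := by
    rw [hMdef, Matrix.add_mul, Matrix.smul_mul, hPP, Matrix.mul_assoc, hCtP]
  have hPM : P * M = M := by
    rw [hMdef, Matrix.mul_add, Matrix.mul_smul, hPP, ← Matrix.mul_assoc, hPC]
  have hAP : A * P = M := by
    rw [hAdef, hMdef, Matrix.add_mul, Matrix.smul_mul, Matrix.one_mul,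
      Matrix.mul_assoc, hCtP]
  have hPA : P * A = M := by
    rw [hAdef, hMdef, Matrix.mul_add, Matrix.mul_smul, Matrix.mul_one,
      ← Matrix.mul_assoc, hPC]
  have hMAinv : M * A⁻¹ = P := by
    rw [← hPA, Matrix.mul_assoc, hAinv, Matrix.mul_one]
  have hAinvM : A⁻¹ * M = P := by
    rw [← hAP, ← Matrix.mul_assoc, hAinv', Matrix.one_mul]
  have hcomm : A⁻¹ * P = P * A⁻¹ := by
    have h1 : A⁻¹ * (M * A⁻¹) = A⁻¹ * M * A⁻¹ := by rw [Matrix.mul_assoc]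
    rw [hMAinv, hAinvM] at h1
    exact h1
  have hMQ : M * (A⁻¹ * P) = P := by
    rw [hcomm, ← Matrix.mul_assoc, hMP, hMAinv]
  have hQM : (A⁻¹ * P) * M = P := by
    rw [Matrix.mul_assoc, hPM, hAinvM]
  have hmp : IsMoorePenrose M (A⁻¹ * P) := by
    refine ⟨?_, ?_, ?_, ?_⟩
    · rw [hMQ, hPM]
    · rw [hQM, hcomm, ← Matrix.mul_assoc, hPP, ← hcomm]
    · rw [hMQ, hPsym]
    · rw [hQM, hPsym]
  have hpinv : pinv M = A⁻¹ * P := pinv_eq hmp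
  have hAIP : A * (1 - P) = lam • (1 - P) := by
    rw [Matrix.mul_sub, Matrix.mul_one, hAP, hAdef, hMdef]
    ext i j
    simp only [Matrix.sub_apply, Matrix.add_apply, Matrix.smul_apply, Matrix.one_apply,
      smul_eq_mul, mul_sub]
    ring
  have h2 : A⁻¹ * (1 - P) = (1 / lam) • (1 - P) := by
    have h3 : A⁻¹ * (A * (1 - P)) = A⁻¹ * (lam • (1 - P)) := by rw [hAIP]
    rw [← Matrix.mul_assoc, hAinv', Matrix.one_mul, Matrix.mul_smul] at h3
    conv_rhs => rw [h3]
    rw [smul_smul, one_div, inv_mul_cancel₀ hlam.ne', one_smul]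
  have hfin : A⁻¹ = A⁻¹ * P + (1 / lam) • (1 - P) := by
    calc A⁻¹ = A⁻¹ * 1 := by rw [Matrix.mul_one]
    _ = A⁻¹ * (P + (1 - P)) := by rw [add_sub_cancel]
    _ = A⁻¹ * P + A⁻¹ * (1 - P) := by rw [Matrix.mul_add]
    _ = A⁻¹ * P + (1 / lam) • (1 - P) := by rw [h2]
  rw [hfin, hpinv]
end
end
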